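/- For any priority ordering o of the states, the fluid equilibrium (q^o, ν^o) is a feasible solution of OriginalFluid; moreover, if the partially-served state p ≠ ⊥, then Σ_{i∈S} ν^o_i = μ. -/

import Mathlib

open scoped Classical
open Finset

/-- A finite tree-structured Markov chain: a finite state space partitioned into
levels `0, …, L-1`, a root `r` at level `0`, a parent map `pa` (with `pa r = r` by
convention), and transition probabilities `p i ∈ (0,1]` of being reached from the
parent, with `p r = 1`. -/
structure TreeMC (S : Type*) [Fintype S] [DecidableEq S] where
  /-- the number of levels -/
  L : ℕ
  /-- the root -/
  r : S
  /-- the parent map (with `pa r = r` by convention) -/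
  pa : S → S
  /-- the level of each state -/
  level : S → ℕ
  /-- the probability of being reached from the parent -/
  p : S → ℝ
  level_lt : ∀ i, level i < L
  level_r : level r = 0
  root_unique : ∀ i, level i = 0 → i = r
  pa_r : pa r = r
  level_pa : ∀ i, i ≠ r → level (pa i) + 1 = level i
  p_pos : ∀ i, 0 < p i
  p_le_one : ∀ i, p i ≤ 1
  p_r : p r = 1

namespace TreeMC

variable {S : Type*} [Fintype S] [DecidableEq S] (M : TreeMC S)

/-- The ancestors of `i`: states on the path from the root to `i` (both included). -/
noncomputable def anc (i : S) : Finset S :=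
  Finset.univ.filter fun a => ∃ n : ℕ, M.pa^[n] i = a

/-- The subtree of `i`: all states having `i` as an ancestor. -/
noncomputable def subt (i : S) : Finset S :=
  Finset.univ.filter fun k => i ∈ M.anc k

/-- The subtree of a set of states. -/
noncomputable def subF (X : Finset S) : Finset S :=
  Finset.univ.filter fun k => ∃ i ∈ X, k ∈ M.subt i

/-- `π i`: the probability that a job passes through state `i`. -/
noncomputable def pi (i : S) : ℝ :=
  ∏ a ∈ M.anc i, M.p a

/-- The children of `i`. -/
noncomputable def child (i : S) : Finset S :=
  Finset.univ.filter fun k => k ≠ M.r ∧ M.pa k = i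

/-- `T` is the top set of `X`: a subset of `X` whose subtree covers `X` and in which
no state lies in the subtree of a different state. -/
def IsTopSet (X T : Finset S) : Prop :=
  T ⊆ X ∧ X ⊆ M.subF T ∧ ∀ i ∈ T, ∀ k ∈ T, i ≠ k → k ∉ M.subt i

/-- Expected future cost conditional on being in state `a`. -/
noncomputable def cf (c : S → ℝ) (a : S) : ℝ :=
  ∑ i ∈ M.subt a, c i * M.pi i / M.pi a

/-- `V` is the ski-rental value function:
`V γ i = min (γ, c i + Σ_{k ∈ child i} p k · V γ k)`. -/
def IsSkiValue (c : S → ℝ) (V : ℝ → S → ℝ) : Prop :=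
  ∀ γ : ℝ, ∀ i : S, V γ i = min γ (c i + ∑ k ∈ M.child i, M.p k * V γ k)

/-- Expected future cost-to-go `V^f`. -/
noncomputable def Vf (V : ℝ → S → ℝ) (γ : ℝ) (i : S) : ℝ :=
  ∑ k ∈ M.child i, M.p k * V γ k

/-- The candidate optimal state duals `β*(γ)`. -/
noncomputable def betaStar (c : S → ℝ) (V : ℝ → S → ℝ) (γ : ℝ) (i : S) : ℝ :=
  max 0 (c i + M.Vf V γ i - γ)

/-- Feasibility for the dual program `D*(γ)`. -/
def DualFeasible (c : S → ℝ) (γ : ℝ) (β : S → ℝ) : Prop :=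
  (∀ i, 0 ≤ β i) ∧ ∀ a, M.cf c a ≤ γ + ∑ i ∈ M.subt a, β i * M.pi i / M.pi a

/-- Feasibility for the fluid LP (OriginalFluid). -/
def OrigFeasible (lam mu : ℝ) (q ν : S → ℝ) : Prop :=
  (∀ i, 0 ≤ q i) ∧ (∀ i, 0 ≤ ν i) ∧ q M.r = lam ∧
    (∀ i, i ≠ M.r → q i = (q (M.pa i) - ν (M.pa i)) * M.p i) ∧
    (∀ i, ν i ≤ q i) ∧ ∑ i : S, ν i ≤ mu

/-- Feasibility for the fluid LP (SimplerFluid). -/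
def SimpFeasible (lam mu : ℝ) (ν : S → ℝ) : Prop :=
  (∀ i, 0 ≤ ν i) ∧ (∀ i, ∑ a ∈ M.anc i, ν a * M.pi i / M.pi a ≤ lam * M.pi i) ∧
    ∑ i : S, ν i ≤ mu

end TreeMC

/-! On the served region `sub(o_[m])` all traffic is absorbed at the top set, so the flow
equations hold with outflow `0` there and outflow `λ π` elsewhere. When a state `p` is
partially served, every state below `p` is thinned by the common factor `1 - ν_p / (λ π p)`,
which keeps the flow multiplicative along the tree. The maximality of `m`, applied at
`m + 1`, first rules out `p ∈ sub(o_[m])` (the top set would not change) and then, since the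
top set of `o_[m] ∪ {p}` is `{p} ∪ Top(o_[m]) \ sub(p)`, gives
`μ < λ (π p + Σ_{Top(o_[m])} π - Σ_{Top(o_[m]) ∩ sub(p)} π)`: this is `κ > 0` and
`ν_p ≤ λ π p`, and `Σ ν = μ` is the defining equation of `ν_p`. -/

namespace TreeMC

variable {S : Type*} [Fintype S] [DecidableEq S] (M : TreeMC S)

lemma mem_anc_iff {i a : S} : a ∈ M.anc i ↔ ∃ n : ℕ, M.pa^[n] i = a := by
  simp [anc]

lemma self_mem_anc (i : S) : i ∈ M.anc i := M.mem_anc_iff.mpr ⟨0, rfl⟩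

lemma pa_mem_anc (i : S) : M.pa i ∈ M.anc i := M.mem_anc_iff.mpr ⟨1, rfl⟩

lemma anc_trans {a b c : S} (hab : a ∈ M.anc b) (hbc : b ∈ M.anc c) : a ∈ M.anc c := by
  obtain ⟨n, rfl⟩ := M.mem_anc_iff.mp hbc
  obtain ⟨k, rfl⟩ := M.mem_anc_iff.mp hab
  exact M.mem_anc_iff.mpr ⟨k + n, Function.iterate_add_apply _ _ _ _⟩

lemma anc_root : M.anc M.r = {M.r} := by
  ext a
  simp only [mem_anc_iff, Finset.mem_singleton, Function.iterate_fixed M.pa_r]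
  exact ⟨fun ⟨_, h⟩ => h.symm, fun h => ⟨0, h.symm⟩⟩

lemma level_le_of_mem_anc {a i : S} (h : a ∈ M.anc i) : M.level a ≤ M.level i := by
  obtain ⟨n, rfl⟩ := M.mem_anc_iff.mp h
  induction n with
  | zero => exact le_rfl
  | succ k ih =>
    rw [Function.iterate_succ_apply']
    refine le_trans ?_ (ih (M.mem_anc_iff.mpr ⟨k, rfl⟩))
    by_cases hr : M.pa^[k] i = M.r
    · rw [hr, M.pa_r]
    · have := M.level_pa _ hr
      omega

lemma notMem_anc_pa {i : S} (hi : i ≠ M.r) : i ∉ M.anc (M.pa i) := fun h => by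
  have := M.level_le_of_mem_anc h
  have := M.level_pa i hi
  omega

lemma anc_eq_insert {i : S} (hi : i ≠ M.r) : M.anc i = insert i (M.anc (M.pa i)) := by
  ext a
  simp only [Finset.mem_insert, mem_anc_iff]
  constructor
  · rintro ⟨_ | k, rfl⟩
    exacts [Or.inl rfl, Or.inr ⟨k, (Function.iterate_succ_apply _ _ _).symm⟩]
  · rintro (rfl | ⟨n, rfl⟩)
    exacts [⟨0, rfl⟩, ⟨n + 1, Function.iterate_succ_apply _ _ _⟩]

lemma pi_pos (i : S) : 0 < M.pi i := Finset.prod_pos fun a _ => M.p_pos a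

lemma pi_root : M.pi M.r = 1 := by
  rw [pi, anc_root, Finset.prod_singleton, M.p_r]

lemma pi_eq_mul_pi_pa {i : S} (hi : i ≠ M.r) : M.pi i = M.p i * M.pi (M.pa i) := by
  rw [pi, M.anc_eq_insert hi, Finset.prod_insert (M.notMem_anc_pa hi), pi]

lemma mem_subt {i k : S} : k ∈ M.subt i ↔ i ∈ M.anc k := by simp [subt]

lemma self_mem_subt (i : S) : i ∈ M.subt i := M.mem_subt.mpr (M.self_mem_anc i)

lemma pa_mem_subt_iff {i x : S} (hi : i ≠ M.r) :
    M.pa i ∈ M.subt x ↔ i ∈ M.subt x ∧ i ≠ x := by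
  rw [mem_subt, mem_subt, M.anc_eq_insert hi, Finset.mem_insert]
  constructor
  · intro h
    exact ⟨Or.inr h, by rintro rfl; exact M.notMem_anc_pa hi h⟩
  · rintro ⟨h | h, hne⟩
    exacts [absurd h.symm hne, h]

lemma mem_subF {X : Finset S} {k : S} : k ∈ M.subF X ↔ ∃ i ∈ X, i ∈ M.anc k := by
  simp [subF, mem_subt]

lemma subset_subF (X : Finset S) : X ⊆ M.subF X :=
  fun i hi => M.mem_subF.mpr ⟨i, hi, M.self_mem_anc i⟩

namespace IsTopSet

variable {M} {X T : Finset S}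

lemma subset_subF (hT : M.IsTopSet X T) : T ⊆ M.subF X := hT.1.trans (M.subset_subF X)

lemma subF_subset (hT : M.IsTopSet X T) : M.subF X ⊆ M.subF T := by
  intro k hk
  obtain ⟨j, hj, hjk⟩ := M.mem_subF.mp hk
  obtain ⟨t, ht, htj⟩ := M.mem_subF.mp (hT.2.1 hj)
  exact M.mem_subF.mpr ⟨t, ht, M.anc_trans htj hjk⟩

lemma root_mem (hT : M.IsTopSet X T) (h : M.r ∈ M.subF X) : M.r ∈ T := by
  obtain ⟨t, ht, htr⟩ := M.mem_subF.mp (hT.subF_subset h)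
  rw [M.anc_root, Finset.mem_singleton] at htr
  rwa [htr] at ht

lemma pa_mem_subF_iff (hT : M.IsTopSet X T) {i : S} (hi : i ≠ M.r) :
    M.pa i ∈ M.subF X ↔ i ∈ M.subF X ∧ i ∉ T := by
  constructor
  · intro h
    obtain ⟨j, hj, hji⟩ := M.mem_subF.mp h
    refine ⟨M.mem_subF.mpr ⟨j, hj, M.anc_trans hji (M.pa_mem_anc i)⟩, fun hiT => ?_⟩
    obtain ⟨t, ht, hti⟩ := M.mem_subF.mp (hT.subF_subset h)
    refine hT.2.2 t ht i hiT ?_ (M.mem_subt.mpr (M.anc_trans hti (M.pa_mem_anc i)))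
    rintro rfl
    exact M.notMem_anc_pa hi hti
  · rintro ⟨hiX, hiT⟩
    obtain ⟨t, ht, hti⟩ := M.mem_subF.mp (hT.subF_subset hiX)
    rw [M.anc_eq_insert hi, Finset.mem_insert] at hti
    rcases hti with rfl | hti
    · exact absurd ht hiT
    · exact M.mem_subF.mpr ⟨t, hT.1 ht, hti⟩

lemma insert_of_mem_subF (hT : M.IsTopSet X T) {x : S} (hx : x ∈ M.subF X) :
    M.IsTopSet (insert x X) T := by
  refine ⟨hT.1.trans (Finset.subset_insert x X), ?_, hT.2.2⟩
  exact Finset.insert_subset (hT.subF_subset hx) hT.2.1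

lemma insert_of_notMem_subF (hT : M.IsTopSet X T) {x : S} (hx : x ∉ M.subF X) :
    M.IsTopSet (insert x X) (insert x (T \ M.subt x)) := by
  refine ⟨Finset.insert_subset_insert x (Finset.sdiff_subset.trans hT.1), ?_, ?_⟩
  · refine Finset.insert_subset (M.subset_subF _ (Finset.mem_insert_self _ _)) fun k hk => ?_
    obtain ⟨t, ht, htk⟩ := M.mem_subF.mp (hT.2.1 hk)
    by_cases htx : t ∈ M.subt x
    · exact M.mem_subF.mpr ⟨x, Finset.mem_insert_self _ _, M.anc_trans (M.mem_subt.mp htx) htk⟩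
    · exact M.mem_subF.mpr ⟨t, Finset.mem_insert_of_mem (Finset.mem_sdiff.mpr ⟨ht, htx⟩), htk⟩
  · simp only [Finset.mem_insert, Finset.mem_sdiff]
    rintro a (rfl | ⟨ha, -⟩) b (rfl | ⟨hb, hbx⟩) hab
    · exact absurd rfl hab
    · exact hbx
    · exact fun hxa => hx (M.mem_subF.mpr ⟨a, hT.1 ha, M.mem_subt.mp hxa⟩)
    · exact hT.2.2 a ha b hb hab

end IsTopSet

lemma sum_insert_sdiff_subt (f : S → ℝ) (T : Finset S) (x : S) :
    ∑ i ∈ insert x (T \ M.subt x), f i = f x + ∑ i ∈ T, f i - ∑ i ∈ T ∩ M.subt x, f i := by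
  rw [Finset.sum_insert fun h => (Finset.mem_sdiff.mp h).2 (M.self_mem_subt x),
    ← Finset.sum_inter_add_sum_sdiff T (M.subt x) f]
  ring

section Equilibrium

variable {M} {lam mu : ℝ} {X T : Finset S} {q ν : S → ℝ}

/-- `inflow` is the arrival rate outside the empty region `sub(X) \ T`, `outflow` the rate
leaving a state outside the served region `sub(X)`. -/
theorem origFeasible_of_flow_profile (hT : M.IsTopSet X T) {inflow outflow : S → ℝ}
    (hq : ∀ i, q i = if i ∈ M.subF X ∧ i ∉ T then 0 else inflow i)
    (hout : ∀ i, q i - ν i = if i ∈ M.subF X then 0 else outflow i)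
    (hin_nonneg : ∀ i, 0 ≤ inflow i) (hout_nonneg : ∀ i, 0 ≤ outflow i)
    (hin_root : inflow M.r = lam)
    (hin_out : ∀ i, i ≠ M.r → inflow i = outflow (M.pa i) * M.p i)
    (hν : ∀ i, 0 ≤ ν i) (hsum : ∑ i, ν i ≤ mu) : M.OrigFeasible lam mu q ν := by
  refine ⟨fun i => ?_, hν, ?_, fun i hi => ?_, fun i => ?_, hsum⟩
  · rw [hq]
    split_ifs
    exacts [le_rfl, hin_nonneg i]
  · rw [hq, if_neg fun h => h.2 (hT.root_mem h.1), hin_root]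
  · have hpa := hT.pa_mem_subF_iff hi
    rw [hq, hout]
    split_ifs with hiX hpaX hpaX
    · exact (zero_mul _).symm
    · exact absurd (hpa.mpr hiX) hpaX
    · exact absurd (hpa.mp hpaX) hiX
    · exact hin_out i hi
  · have := hout i
    split_ifs at this <;> linarith [hout_nonneg i]

theorem origFeasible_of_no_partial (hT : M.IsTopSet X T) (hlam : 0 < lam)
    (hserve : lam * ∑ i ∈ T, M.pi i ≤ mu)
    (hfree : ∀ i, i ∉ M.subF X → q i = lam * M.pi i ∧ ν i = 0)
    (htop : ∀ i ∈ T, q i = lam * M.pi i ∧ ν i = lam * M.pi i)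
    (hempty : ∀ i ∈ M.subF X, i ∉ T → q i = 0 ∧ ν i = 0) : M.OrigFeasible lam mu q ν := by
  have hq (i : S) : q i = if i ∈ M.subF X ∧ i ∉ T then 0 else lam * M.pi i := by
    split_ifs with h
    · exact (hempty i h.1 h.2).1
    · by_cases hiT : i ∈ T
      · exact (htop i hiT).1
      · exact (hfree i fun hiX => h ⟨hiX, hiT⟩).1
  have hν (i : S) : ν i = if i ∈ T then lam * M.pi i else 0 := by
    split_ifs with hiT
    · exact (htop i hiT).2
    · by_cases hiX : i ∈ M.subF X
      exacts [(hempty i hiX hiT).2, (hfree i hiX).2]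
  have hpos (i : S) : 0 ≤ lam * M.pi i := (mul_pos hlam (M.pi_pos i)).le
  refine origFeasible_of_flow_profile hT hq (fun i => ?_) hpos hpos
    (by rw [M.pi_root, mul_one]) (fun i hi => by rw [M.pi_eq_mul_pi_pa hi]; ring)
    (fun i => by rw [hν]; exact ite_nonneg (hpos i) le_rfl) ?_
  · have hTX : i ∈ T → i ∈ M.subF X := fun h => hT.subset_subF h
    rw [hq, hν]
    split_ifs <;> first | tauto | ring
  · simpa only [hν, Finset.sum_ite_mem, Finset.univ_inter, Finset.mul_sum] using hserve

lemma eq_thinned_profile (hT : M.IsTopSet X T) {x : S} (hx : x ∉ M.subF X) {nuP : ℝ}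
    (hfree : ∀ i, i ∉ M.subF X → i ∉ M.subt x → q i = lam * M.pi i ∧ ν i = 0)
    (htop : ∀ i ∈ T, i ∉ M.subt x → q i = lam * M.pi i ∧ ν i = lam * M.pi i)
    (hempty : ∀ i ∈ M.subF X, i ∉ T → q i = 0 ∧ ν i = 0)
    (hpartial : q x = lam * M.pi x ∧ ν x = nuP)
    (hblocked : ∀ i ∈ T ∩ M.subt x,
      q i = lam * M.pi i - nuP * M.pi i / M.pi x ∧ ν i = q i)
    (hreduced : ∀ i ∈ M.subt x, i ≠ x → i ∉ M.subF X →
      q i = lam * M.pi i - nuP * M.pi i / M.pi x ∧ ν i = 0) (i : S) :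
    q i = (if i ∈ M.subF X ∧ i ∉ T then 0
      else M.pi i * (lam - if i ∈ M.subt x ∧ i ≠ x then nuP / M.pi x else 0)) ∧
    ν i = (if i ∈ T then M.pi i * (lam - if i ∈ M.subt x then nuP / M.pi x else 0) else 0) +
      if i = x then nuP else 0 := by
  have hTX : i ∈ T → i ∈ M.subF X := fun h => hT.subset_subF h
  have hxx := M.self_mem_subt x
  grind

theorem origFeasible_of_thinned_profile (hT : M.IsTopSet X T) {x : S} (hx : x ∉ M.subF X)
    {nuP : ℝ} (hnuP_nonneg : 0 ≤ nuP) (hnuP_le : nuP ≤ lam * M.pi x)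
    (hbudget : lam * ∑ i ∈ T, M.pi i +
      nuP * (1 - (∑ i ∈ T ∩ M.subt x, M.pi i) / M.pi x) = mu)
    (hprof : ∀ i, q i = (if i ∈ M.subF X ∧ i ∉ T then 0
      else M.pi i * (lam - if i ∈ M.subt x ∧ i ≠ x then nuP / M.pi x else 0)) ∧
    ν i = (if i ∈ T then M.pi i * (lam - if i ∈ M.subt x then nuP / M.pi x else 0) else 0) +
      if i = x then nuP else 0) :
    M.OrigFeasible lam mu q ν ∧ ∑ i, ν i = mu := by
  set θ := nuP / M.pi x
  have hxpos := M.pi_pos x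
  have hθ_le : θ ≤ lam := (div_le_iff₀ hxpos).mpr (by linarith)
  have hthin (i : S) (P : Prop) [Decidable P] : 0 ≤ M.pi i * (lam - if P then θ else 0) := by
    have hθ_nonneg : 0 ≤ θ := div_nonneg hnuP_nonneg hxpos.le
    refine mul_nonneg (M.pi_pos i).le ?_
    split_ifs <;> linarith
  have hsum : ∑ i, ν i = mu := by
    simp only [fun i => (hprof i).2, Finset.sum_add_distrib, Finset.sum_ite_mem,
      Finset.univ_inter, Finset.sum_ite_eq', Finset.mem_univ, if_true, mul_sub,
      Finset.sum_sub_distrib, mul_ite, mul_zero, ← Finset.sum_mul]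
    rw [← hbudget]
    ring
  refine ⟨origFeasible_of_flow_profile hT (fun i => (hprof i).1) (fun i => ?_)
    (fun i => hthin i (i ∈ M.subt x ∧ i ≠ x)) (fun i => hthin i (i ∈ M.subt x)) ?_
    (fun i hi => ?_) (fun i => ?_) hsum.le, hsum⟩
  · have hTX : i ∈ T → i ∈ M.subF X := fun h => hT.subset_subF h
    have hxx := M.self_mem_subt x
    have hx0 := hxpos.ne'
    rw [(hprof i).1, (hprof i).2]
    grind
  · have hroot : ¬(M.r ∈ M.subt x ∧ M.r ≠ x) := fun ⟨h, hne⟩ => by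
      rw [mem_subt, anc_root, Finset.mem_singleton] at h
      exact hne h.symm
    rw [if_neg hroot, M.pi_root, sub_zero, one_mul]
  · simp only [M.pa_mem_subt_iff hi, M.pi_eq_mul_pi_pa hi]
    ring
  · rw [(hprof i).2]
    exact add_nonneg (ite_nonneg (hthin i (i ∈ M.subt x)) le_rfl) (ite_nonneg hnuP_nonneg le_rfl)

end Equilibrium

end TreeMC

lemma Finset.image_filter_lt_succ {α : Type*} [DecidableEq α] {n m : ℕ} (f : Fin n → α)
    (hm : m < n) :
    (Finset.univ.filter fun j : Fin n => (j : ℕ) < m + 1).image f =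
      insert (f ⟨m, hm⟩) ((Finset.univ.filter fun j : Fin n => (j : ℕ) < m).image f) := by
  rw [← Finset.image_insert]
  congr 1
  ext j
  simp [Fin.ext_iff, Nat.le_iff_lt_or_eq, or_comm]

/-- Here `s`, `t`, `P` stand for `Σ_{Top(o_[m])} π`, `Σ_{Top(o_[m]) ∩ sub(p)} π` and `π p`;
`hgt` is the maximality of `m` at `m + 1`. -/
lemma partial_rate_bounds {lam mu s t P nuP : ℝ} (hlam : 0 < lam) (hP : 0 < P)
    (hlt : lam * s < mu) (hgt : mu < lam * (P + s - t))
    (hnuP : nuP = (mu - lam * s) / (1 - t / P)) :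
    0 ≤ nuP ∧ nuP ≤ lam * P ∧ lam * s + nuP * (1 - t / P) = mu := by
  have hκ : 0 < 1 - t / P := by
    rw [sub_pos, div_lt_one hP]
    nlinarith
  have hκ_eq : lam * P * (1 - t / P) = lam * (P - t) := by
    field_simp
  refine ⟨hnuP ▸ div_nonneg (by linarith) hκ.le, ?_, ?_⟩
  · rw [hnuP, div_le_iff₀ hκ, hκ_eq]
    linarith
  · rw [hnuP, div_mul_cancel₀ _ hκ.ne']
    ring

/-- The priority ordering `o` is `e : Fin |S| ≃ S`; `Om = o_[m]`, `Tm = Top(o_[m])`, the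
partially-served state is `pOpt` (`none` encodes `⊥`) and `nuP = ν^o_p`. -/
theorem fluid_equilibrium_feasible_general {S : Type*} [Fintype S] [DecidableEq S]
    (M : TreeMC S)
    (lam mu : ℝ) (hlam0 : 0 < lam)
    (e : Fin (Fintype.card S) ≃ S)
    (m : ℕ) (hm : m ≤ Fintype.card S)
    (Om : Finset S)
    (hOm : Om = (Finset.univ.filter fun j : Fin (Fintype.card S) => (j : ℕ) < m).image ⇑e)
    (Tm : Finset S) (hTm : M.IsTopSet Om Tm)
    (hserve : lam * ∑ i ∈ Tm, M.pi i ≤ mu)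
    (hmax : ∀ m' : ℕ, m < m' → m' ≤ Fintype.card S → ∀ T' : Finset S,
      M.IsTopSet
        ((Finset.univ.filter fun j : Fin (Fintype.card S) => (j : ℕ) < m').image ⇑e) T' →
      mu < lam * ∑ i ∈ T', M.pi i)
    (pOpt : Option S)
    (hpsome : ∀ h : m < Fintype.card S,
      lam * ∑ i ∈ Tm, M.pi i < mu → pOpt = some (e ⟨m, h⟩))
    (hpnone : (m = Fintype.card S ∨ lam * ∑ i ∈ Tm, M.pi i = mu) → pOpt = none)
    (nuP : ℝ)
    (hnuPsome : ∀ pp : S, pOpt = some pp →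
      nuP = (mu - lam * ∑ i ∈ Tm, M.pi i) /
        (1 - (∑ i ∈ Tm ∩ M.subt pp, M.pi i) / M.pi pp))
    (q ν : S → ℝ)
    -- (T-1) un-reduced states
    (hq1 : ∀ i : S, i ∉ M.subF Om → (∀ pp : S, pOpt = some pp → i ∉ M.subt pp) →
      q i = lam * M.pi i ∧ ν i = 0)
    -- (T-2) fully-blocked states
    (hq2 : ∀ i ∈ Tm, (∀ pp : S, pOpt = some pp → i ∉ M.subt pp) →
      q i = lam * M.pi i ∧ ν i = lam * M.pi i)
    -- (T-3) empty states
    (hq3 : ∀ i ∈ M.subF Om, i ∉ Tm → q i = 0 ∧ ν i = 0)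
    -- (T-4) the partially-served state
    (hq4 : ∀ pp : S, pOpt = some pp → q pp = lam * M.pi pp ∧ ν pp = nuP)
    -- (T-5) partially-blocked states
    (hq5 : ∀ pp : S, pOpt = some pp → ∀ i ∈ Tm ∩ M.subt pp,
      q i = lam * M.pi i - nuP * M.pi i / M.pi pp ∧ ν i = q i)
    -- (T-6) partially-reduced states
    (hq6 : ∀ pp : S, pOpt = some pp → ∀ i ∈ M.subt pp, i ≠ pp → i ∉ M.subF Om →
      q i = lam * M.pi i - nuP * M.pi i / M.pi pp ∧ ν i = 0) :
    M.OrigFeasible lam mu q ν ∧ (pOpt ≠ none → ∑ i : S, ν i = mu) := by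
  rcases pOpt with _ | pp
  · simp only [reduceCtorEq, IsEmpty.forall_iff, implies_true, forall_const] at hq1 hq2
    exact ⟨TreeMC.origFeasible_of_no_partial hTm hlam0 hserve hq1 hq2 hq3, fun h => (h rfl).elim⟩
  simp only [Option.some.injEq, forall_eq'] at hq1 hq2 hq4 hq5 hq6 hnuPsome hpsome
  have hlt : lam * ∑ i ∈ Tm, M.pi i < mu :=
    hserve.lt_of_ne fun h => by simpa using hpnone (Or.inr h)
  have hmlt : m < Fintype.card S := hm.lt_of_ne fun h => by simpa using hpnone (Or.inl h)
  obtain rfl := hpsome hmlt hlt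
  have hnext : ∀ T', M.IsTopSet (insert (e ⟨m, hmlt⟩) Om) T' → mu < lam * ∑ i ∈ T', M.pi i := by
    rw [hOm, ← Finset.image_filter_lt_succ]
    exact hmax (m + 1) m.lt_succ_self hmlt
  have hfresh : e ⟨m, hmlt⟩ ∉ M.subF Om := fun h =>
    (hnext Tm (hTm.insert_of_mem_subF h)).not_ge hserve
  have hgt := hnext _ (hTm.insert_of_notMem_subF hfresh)
  rw [M.sum_insert_sdiff_subt] at hgt
  obtain ⟨hnuP_nonneg, hnuP_le, hbudget⟩ :=
    partial_rate_bounds hlam0 (M.pi_pos _) hlt hgt hnuPsome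
  obtain ⟨hfeas, hsum⟩ := TreeMC.origFeasible_of_thinned_profile hTm hfresh hnuP_nonneg hnuP_le
    hbudget (TreeMC.eq_thinned_profile hTm hfresh hq1 hq2 hq3 hq4 hq5 hq6)
  exact ⟨hfeas, fun _ => hsum⟩

/-- For any priority ordering `o` (here `e : Fin |S| ≃ S`, with
`o_[m]` = `Om` the set of the `m` highest-priority states, `Tm = Top(o_[m])` where `m`
is the maximum position with `λ·Σ_{i ∈ Top(o_[m])} π(i) ≤ μ`, partially-served state
`pOpt` (`none` encodes `⊥`), and `nuP = ν^o_p`), the fluid equilibrium `(q, ν) = (q^o, ν^o)`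
is a feasible solution of OriginalFluid; moreover, if `pOpt ≠ ⊥` then `Σ_{i∈S} ν_i = μ`. -/
theorem fluid_equilibrium_feasible {S : Type*} [Fintype S] [DecidableEq S]
    (M : TreeMC S)
    (lam mu : ℝ) (hlam0 : 0 < lam) (hlam1 : lam < 1) (hmu0 : 0 < mu) (hmu1 : mu ≤ 1)
    (e : Fin (Fintype.card S) ≃ S)
    (m : ℕ) (hm : m ≤ Fintype.card S)
    (Om : Finset S)
    (hOm : Om = (Finset.univ.filter fun j : Fin (Fintype.card S) => (j : ℕ) < m).image ⇑e)
    (Tm : Finset S) (hTm : M.IsTopSet Om Tm)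
    (hserve : lam * ∑ i ∈ Tm, M.pi i ≤ mu)
    (hmax : ∀ m' : ℕ, m < m' → m' ≤ Fintype.card S → ∀ T' : Finset S,
      M.IsTopSet
        ((Finset.univ.filter fun j : Fin (Fintype.card S) => (j : ℕ) < m').image ⇑e) T' →
      mu < lam * ∑ i ∈ T', M.pi i)
    (pOpt : Option S)
    (hpsome : ∀ h : m < Fintype.card S,
      lam * ∑ i ∈ Tm, M.pi i < mu → pOpt = some (e ⟨m, h⟩))
    (hpnone : (m = Fintype.card S ∨ lam * ∑ i ∈ Tm, M.pi i = mu) → pOpt = none)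
    (nuP : ℝ)
    (hnuPnone : pOpt = none → nuP = 0)
    (hnuPsome : ∀ pp : S, pOpt = some pp →
      nuP = (mu - lam * ∑ i ∈ Tm, M.pi i) /
        (1 - (∑ i ∈ Tm ∩ M.subt pp, M.pi i) / M.pi pp))
    (q ν : S → ℝ)
    -- (T-1) un-reduced states
    (hq1 : ∀ i : S, i ∉ M.subF Om → (∀ pp : S, pOpt = some pp → i ∉ M.subt pp) →
      q i = lam * M.pi i ∧ ν i = 0)
    -- (T-2) fully-blocked states
    (hq2 : ∀ i ∈ Tm, (∀ pp : S, pOpt = some pp → i ∉ M.subt pp) →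
      q i = lam * M.pi i ∧ ν i = lam * M.pi i)
    -- (T-3) empty states
    (hq3 : ∀ i ∈ M.subF Om, i ∉ Tm → q i = 0 ∧ ν i = 0)
    -- (T-4) the partially-served state
    (hq4 : ∀ pp : S, pOpt = some pp → q pp = lam * M.pi pp ∧ ν pp = nuP)
    -- (T-5) partially-blocked states
    (hq5 : ∀ pp : S, pOpt = some pp → ∀ i ∈ Tm ∩ M.subt pp,
      q i = lam * M.pi i - nuP * M.pi i / M.pi pp ∧ ν i = q i)
    -- (T-6) partially-reduced states
    (hq6 : ∀ pp : S, pOpt = some pp → ∀ i ∈ M.subt pp, i ≠ pp → i ∉ M.subF Om →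
      q i = lam * M.pi i - nuP * M.pi i / M.pi pp ∧ ν i = 0) :
    M.OrigFeasible lam mu q ν ∧ (pOpt ≠ none → ∑ i : S, ν i = mu) :=
  fluid_equilibrium_feasible_general M lam mu hlam0 e m hm Om hOm Tm hTm hserve hmax pOpt hpsome
    hpnone nuP hnuPsome q ν hq1 hq2 hq3 hq4 hq5 hq6
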